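/- If 0 < L₁ < L₂ and, for i = 1, 2, cᵢ denotes the unique real solution of h(c − Lᵢ) = h(c) − Lᵢ·h′(c), then c₁ < c₂; that is, the function c(L) is strictly increasing on (0, ∞). -/

import Mathlib

/-!
Write `g(c, L) = h(c - L) - (h(c) - L h'(c))` (`hillTangentGap`), so that `c(L)` is the root
of `g(·, L)`. Since `∂g/∂L = 1/cosh(c - L) - 1/cosh c` and `g(c, 0) = 0`, for fixed `c`
the function `g(c, ·)` increases on `[0, 2c]` and decreases on `[max 0 (2c), ∞)`. Hence a
root `L > 0` forces `0 < c < L/2`, and `g(c₁, L₂) < g(c₁, L₁) = 0`. On the other hand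
`∂g/∂c = 1/cosh c - 1/cosh(c - L) + L sinh c / cosh² c > 0` for `0 < c < L/2`, so `g(·, L₂)`
is increasing on `[0, L₂/2]`; as it is negative at `c₁` and vanishes at `c₂`, `c₁ < c₂`.
-/

/-- The hill function `h(x) = arccos(tanh x)`. -/
noncomputable def hill (x : ℝ) : ℝ := Real.arccos (Real.tanh x)

/-- The derivative of the hill function: `h'(x) = -1/cosh x`. -/
noncomputable def hill' (x : ℝ) : ℝ := -1 / Real.cosh x

open Real Set

theorem Real.hasDerivAt_tanh (x : ℝ) : HasDerivAt tanh (cosh x ^ 2)⁻¹ x := by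
  have hcosh := (cosh_pos x).ne'
  have h := (hasDerivAt_sinh x).div (hasDerivAt_cosh x) hcosh
  rw [show tanh = fun y => sinh y / cosh y from funext tanh_eq_sinh_div_cosh]
  refine h.congr_deriv ?_
  field_simp
  linarith [cosh_sq_sub_sinh_sq x]

theorem Real.one_sub_tanh_sq (x : ℝ) : 1 - tanh x ^ 2 = (cosh x ^ 2)⁻¹ := by
  have hcosh := (cosh_pos x).ne'
  rw [tanh_eq_sinh_div_cosh]
  field_simp
  linarith [cosh_sq_sub_sinh_sq x]

theorem hasDerivAt_hill (x : ℝ) : HasDerivAt hill (hill' x) x := by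
  have h := (hasDerivAt_arccos (neg_one_lt_tanh x).ne' (tanh_lt_one x).ne).comp x
    (hasDerivAt_tanh x)
  refine h.congr_deriv ?_
  rw [one_sub_tanh_sq, sqrt_inv, sqrt_sq (cosh_pos x).le, hill']
  field_simp

theorem hasDerivAt_hill' (x : ℝ) : HasDerivAt hill' (sinh x / cosh x ^ 2) x := by
  have h := ((hasDerivAt_cosh x).inv (cosh_pos x).ne').neg
  rw [show hill' = fun y => -(cosh y)⁻¹ from funext fun y => by rw [hill', neg_div, one_div]]
  refine h.congr_deriv ?_
  rw [neg_div, neg_neg]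

noncomputable def hillTangentGap (c L : ℝ) : ℝ := hill (c - L) - (hill c - L * hill' c)

theorem hillTangentGap_eq_zero_iff {c L : ℝ} :
    hillTangentGap c L = 0 ↔ hill (c - L) = hill c - L * hill' c :=
  sub_eq_zero

theorem hillTangentGap_zero_right (c : ℝ) : hillTangentGap c 0 = 0 := by
  simp [hillTangentGap]

theorem hasDerivAt_hillTangentGap_right (c L : ℝ) :
    HasDerivAt (hillTangentGap c) (1 / cosh (c - L) - 1 / cosh c) L := by
  have h := ((hasDerivAt_hill (c - L)).comp L ((hasDerivAt_id L).const_sub c)).sub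
    ((hasDerivAt_id L).mul_const (hill' c) |>.const_sub (hill c))
  refine h.congr_deriv ?_
  simp only [hill']
  ring

theorem hasDerivAt_hillTangentGap_left (c L : ℝ) :
    HasDerivAt (fun c => hillTangentGap c L)
      (1 / cosh c - 1 / cosh (c - L) + L * (sinh c / cosh c ^ 2)) c := by
  have h := ((hasDerivAt_hill (c - L)).comp c ((hasDerivAt_id c).sub_const L)).sub
    ((hasDerivAt_hill c).sub ((hasDerivAt_hill' c).const_mul L))
  refine h.congr_deriv ?_
  simp only [hill']
  ring

theorem continuous_hillTangentGap_right (c : ℝ) : Continuous (hillTangentGap c) :=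
  continuous_iff_continuousAt.2 fun L =>
    (hasDerivAt_hillTangentGap_right c L).continuousAt

theorem continuous_hillTangentGap_left (L : ℝ) : Continuous fun c => hillTangentGap c L :=
  continuous_iff_continuousAt.2 fun c =>
    (hasDerivAt_hillTangentGap_left c L).continuousAt

theorem abs_lt_abs_sub_iff {α : Type*} [CommRing α] [LinearOrder α] [IsStrictOrderedRing α]
    {c L : α} : |c| < |c - L| ↔ 0 < L * (L - 2 * c) := by
  rw [← sq_lt_sq, ← sub_pos]
  ring_nf

theorem strictAntiOn_hillTangentGap_right (c : ℝ) :
    StrictAntiOn (hillTangentGap c) (Ici (max 0 (2 * c))) := by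
  refine strictAntiOn_of_deriv_neg (convex_Ici _) (continuous_hillTangentGap_right c).continuousOn
    fun L hL => ?_
  rw [interior_Ici, mem_Ioi, max_lt_iff] at hL
  have hcosh : cosh c < cosh (c - L) :=
    cosh_lt_cosh.2 (abs_lt_abs_sub_iff.2 (mul_pos hL.1 (by linarith)))
  rw [(hasDerivAt_hillTangentGap_right c L).deriv, sub_neg]
  exact one_div_lt_one_div_of_lt (cosh_pos c) hcosh

theorem strictMonoOn_hillTangentGap_right (c : ℝ) :
    StrictMonoOn (hillTangentGap c) (Icc 0 (2 * c)) := by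
  refine strictMonoOn_of_deriv_pos (convex_Icc _ _) (continuous_hillTangentGap_right c).continuousOn
    fun L hL => ?_
  rw [interior_Icc, mem_Ioo] at hL
  have hcosh : cosh (c - L) < cosh c := by
    rw [cosh_lt_cosh, abs_of_pos (by linarith : 0 < c), abs_lt]
    constructor <;> linarith
  rw [(hasDerivAt_hillTangentGap_right c L).deriv, sub_pos]
  exact one_div_lt_one_div_of_lt (cosh_pos _) hcosh

theorem strictMonoOn_hillTangentGap_left (L : ℝ) :
    StrictMonoOn (fun c => hillTangentGap c L) (Icc 0 (L / 2)) := by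
  refine strictMonoOn_of_deriv_pos (convex_Icc _ _) (continuous_hillTangentGap_left L).continuousOn
    fun c hc => ?_
  rw [interior_Icc, mem_Ioo] at hc
  have hcosh : cosh c ≤ cosh (c - L) := by
    rw [cosh_le_cosh, abs_of_pos hc.1, abs_of_neg (by linarith)]
    linarith
  have hslope : 0 < L * (sinh c / cosh c ^ 2) :=
    mul_pos (by linarith) (div_pos (sinh_pos_iff.2 hc.1) (by positivity))
  have hcosh_inv : 1 / cosh (c - L) ≤ 1 / cosh c := one_div_le_one_div_of_le (cosh_pos c) hcosh
  rw [(hasDerivAt_hillTangentGap_left c L).deriv]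
  linarith

theorem pos_of_hillTangentGap_eq_zero {c L : ℝ} (hL : 0 < L) (h : hillTangentGap c L = 0) :
    0 < c := by
  by_contra! hc
  have hmax : max 0 (2 * c) = 0 := max_eq_left (by linarith)
  have := strictAntiOn_hillTangentGap_right c (by simp [hmax]) (by simp [hmax, hL.le]) hL
  rw [hillTangentGap_zero_right, h] at this
  exact this.false

theorem two_mul_lt_of_hillTangentGap_eq_zero {c L : ℝ} (hL : 0 < L)
    (h : hillTangentGap c L = 0) : 2 * c < L := by
  by_contra! hcL
  have hc := pos_of_hillTangentGap_eq_zero hL h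
  have := strictMonoOn_hillTangentGap_right c ⟨le_rfl, by linarith⟩ ⟨hL.le, hcL⟩ hL
  rw [hillTangentGap_zero_right, h] at this
  exact this.false

theorem hillTangentGap_neg_of_lt {c L₁ L₂ : ℝ} (hL₁ : 0 < L₁) (hL₁₂ : L₁ < L₂)
    (h : hillTangentGap c L₁ = 0) : hillTangentGap c L₂ < 0 := by
  have hmem : L₁ ∈ Ici (max 0 (2 * c)) :=
    max_le hL₁.le (two_mul_lt_of_hillTangentGap_eq_zero hL₁ h).le
  rw [← h]
  exact strictAntiOn_hillTangentGap_right c hmem (le_trans hmem hL₁₂.le) hL₁₂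

/-- If `0 < L₁ < L₂` and `cᵢ` solves `h (c - Lᵢ) = h c - Lᵢ * h' c`, then `c₁ < c₂`:
the function `c(L)` is strictly increasing on `(0, ∞)`. -/
theorem hill_c_strictMono {L₁ L₂ c₁ c₂ : ℝ}
    (hL₁ : 0 < L₁) (hL₁₂ : L₁ < L₂)
    (hc₁ : hill (c₁ - L₁) = hill c₁ - L₁ * hill' c₁)
    (hc₂ : hill (c₂ - L₂) = hill c₂ - L₂ * hill' c₂) :
    c₁ < c₂ := by
  rw [← hillTangentGap_eq_zero_iff] at hc₁ hc₂
  have hL₂ : 0 < L₂ := hL₁.trans hL₁₂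
  have hc₁_mem : c₁ ∈ Icc 0 (L₂ / 2) :=
    ⟨(pos_of_hillTangentGap_eq_zero hL₁ hc₁).le,
      by linarith [two_mul_lt_of_hillTangentGap_eq_zero hL₁ hc₁]⟩
  have hc₂_mem : c₂ ∈ Icc 0 (L₂ / 2) :=
    ⟨(pos_of_hillTangentGap_eq_zero hL₂ hc₂).le,
      by linarith [two_mul_lt_of_hillTangentGap_eq_zero hL₂ hc₂]⟩
  have hgap : hillTangentGap c₁ L₂ < hillTangentGap c₂ L₂ :=
    hc₂ ▸ hillTangentGap_neg_of_lt hL₁ hL₁₂ hc₁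
  exact (strictMonoOn_hillTangentGap_left L₂).lt_iff_lt hc₁_mem hc₂_mem |>.1 hgap
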